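/- arXiv:2105.12103 — 6 statements merged into one kernel-verified Lean document; each statement's English description precedes it below -/
import Mathlib

section
/- Let A be a real 3×3 matrix (indexed by Fin 3) that is symmetric (A j i = A i j for all i, j) and trace-free (A 0 0 + A 1 1 + A 2 2 = 0). Then the squared Frobenius norm of A satisfies ∑_{i,j ∈ Fin 3} (A i j)^2 ≥ (3/2)·(A 0 0)^2 + 2·((A 0 1)^2 + (A 0 2)^2). -/
theorem frobenius_sq_ge_of_symm_traceless
    (A : Matrix (Fin 3) (Fin 3) ℝ)
    (hsymm : ∀ i j : Fin 3, A j i = A i j)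
    (htr : A 0 0 + A 1 1 + A 2 2 = 0) :
    ∑ i : Fin 3, ∑ j : Fin 3, (A i j) ^ 2 ≥
      (3 / 2) * (A 0 0) ^ 2 + 2 * ((A 0 1) ^ 2 + (A 0 2) ^ 2) := by
  simp only [Fin.sum_univ_three]
  have h10 := hsymm 0 1
  have h20 := hsymm 0 2
  have h21 := hsymm 1 2
  have h00 : A 0 0 = -(A 1 1 + A 2 2) := by linarith
  rw [h00, h10, h20, h21]
  nlinarith [sq_nonneg (A 1 1 - A 2 2), sq_nonneg (A 1 2)]
end

section
/- Let A be a real 3×3 matrix (indexed by Fin 3) that is symmetric (A j i = A i j for all i, j) and trace-free (A 0 0 + A 1 1 + A 2 2 = 0), and let v ∈ EuclideanSpace ℝ (Fin 3) be a unit vector (‖v‖ = 1). Then ∑_{i,j ∈ Fin 3} (A i j)^2 ≥ (3/2)·‖A.mulVec v‖^2, where A.mulVec v denotes matrix–vector multiplication and the norm is the Euclidean norm. -/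
set_option maxHeartbeats 2000000
lemma key_scalar (a b d e f v1 v2 v3 : ℝ) (hv : v1^2+v2^2+v3^2 = 1) :
    2*(a^2+b^2+(a+b)^2+2*d^2+2*e^2+2*f^2) -
      3*((a*v1+d*v2+e*v3)^2+(d*v1+b*v2+f*v3)^2+(e*v1+f*v2-(a+b)*v3)^2) ≥ 0 := by
  have h : 2*(a^2+b^2+(a+b)^2+2*d^2+2*e^2+2*f^2) -
      3*((a*v1+d*v2+e*v3)^2+(d*v1+b*v2+f*v3)^2+(e*v1+f*v2-(a+b)*v3)^2) =
      (((-2)*f*v1*v2*v3 + (1)*e*v3 + (-2)*e*v1^2*v3 + (1)*d*v2 + (-2)*d*v1^2*v2 + (1)*b*v1*v3^2 + (-1)*b*v1*v2^2 + (1)*a*v1 + (1)*a*v1*v3^2 + (-1)*a*v1^3)^2 + ((1)*f*v3 + (-2)*f*v2^2*v3 + (-2)*e*v1*v2*v3 + (1)*d*v1 + (-2)*d*v1*v2^2 + (1)*b*v2 + (1)*b*v2*v3^2 + (-1)*b*v2^3 + (1)*a*v2*v3^2 + (-1)*a*v1^2*v2)^2 + ((1)*f*v2 + (-2)*f*v2*v3^2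 + (1)*e*v1 + (-2)*e*v1*v3^2 + (-2)*d*v1*v2*v3 + (-1)*b*v3 + (1)*b*v3^3 + (-1)*b*v2^2*v3 + (-1)*a*v3 + (1)*a*v3^3 + (-1)*a*v1^2*v3)^2) + 2*(((1)*f*v2*v3 + (1)*f*v1^2*v2*v3 + (-1)*e*v1*v3 + (1)*e*v1^3*v3 + (-1)*d*v1*v2 + (1)*d*v1^3*v2 + (-1/2)*b*v3^2 + (1/2)*b*v2^2 + (-1/2)*b*v1^2*v3^2 + (1/2)*b*v1^2*v2^2 + (1)*a + (-1/2)*a*v3^2 + (-3/2)*a*v1^2 + (-1/2)*a*v1^2*v3^2 + (1/2)*a*v1^4)^2 + ((-1)*f*v1*v3 + (1)*f*v1*v2^2*v3 + (-1)*e*v2*v3 + (1)*e*v1^2*v2*v3 + (1)*d + (-1)*d*v2^2 + (-1)*d*v1^2 + (1)*d*v1^2*v2^2 + (-1)*b*v1*v2 + (-1/2)*b*v1*v2*v3^2 + (1/2)*b*v1*v2^3 + (-1)*a*v1*v2 + (-1/2)*a*v1*v2*v3^2 + (1/2)*a*v1^3*v2)^2 + ((-1)*f*v1*v2 + (1)*f*v1*v2*v3^2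 + (1)*e + (-1)*e*v3^2 + (-1)*e*v1^2 + (1)*e*v1^2*v3^2 + (-1)*d*v2*v3 + (1)*d*v1^2*v2*v3 + (1)*b*v1*v3 + (-1/2)*b*v1*v3^3 + (1/2)*b*v1*v2^2*v3 + (-1/2)*a*v1*v3^3 + (1/2)*a*v1^3*v3)^2 + ((-1)*f*v1*v3 + (1)*f*v1*v2^2*v3 + (-1)*e*v2*v3 + (1)*e*v1^2*v2*v3 + (1)*d + (-1)*d*v2^2 + (-1)*d*v1^2 + (1)*d*v1^2*v2^2 + (-1)*b*v1*v2 + (-1/2)*b*v1*v2*v3^2 + (1/2)*b*v1*v2^3 + (-1)*a*v1*v2 + (-1/2)*a*v1*v2*v3^2 + (1/2)*a*v1^3*v2)^2 + ((-1)*f*v2*v3 + (1)*f*v2^3*v3 + (1)*e*v1*v3 + (1)*e*v1*v2^2*v3 + (-1)*d*v1*v2 + (1)*d*v1*v2^3 + (1)*b + (-1/2)*b*v3^2 + (-3/2)*b*v2^2 + (-1/2)*b*v2^2*v3^2 + (1/2)*b*v2^4 + (-1/2)*a*v3^2 + (-1/2)*a*v2^2*v3^2 + (1/2)*a*v1^2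 + (1/2)*a*v1^2*v2^2)^2 + ((1)*f + (-1)*f*v3^2 + (-1)*f*v2^2 + (1)*f*v2^2*v3^2 + (-1)*e*v1*v2 + (1)*e*v1*v2*v3^2 + (-1)*d*v1*v3 + (1)*d*v1*v2^2*v3 + (-1/2)*b*v2*v3^3 + (1/2)*b*v2^3*v3 + (1)*a*v2*v3 + (-1/2)*a*v2*v3^3 + (1/2)*a*v1^2*v2*v3)^2 + ((-1)*f*v1*v2 + (1)*f*v1*v2*v3^2 + (1)*e + (-1)*e*v3^2 + (-1)*e*v1^2 + (1)*e*v1^2*v3^2 + (-1)*d*v2*v3 + (1)*d*v1^2*v2*v3 + (1)*b*v1*v3 + (-1/2)*b*v1*v3^3 + (1/2)*b*v1*v2^2*v3 + (-1/2)*a*v1*v3^3 + (1/2)*a*v1^3*v3)^2 + ((1)*f + (-1)*f*v3^2 + (-1)*f*v2^2 + (1)*f*v2^2*v3^2 + (-1)*e*v1*v2 + (1)*e*v1*v2*v3^2 + (-1)*d*v1*v3 + (1)*d*v1*v2^2*v3 + (-1/2)*b*v2*v3^3 + (1/2)*b*v2^3*v3 + (1)*a*v2*v3 + (-1/2)*a*v2*v3^3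 + (1/2)*a*v1^2*v2*v3)^2 + ((-1)*f*v2*v3 + (1)*f*v2*v3^3 + (-1)*e*v1*v3 + (1)*e*v1*v3^3 + (1)*d*v1*v2 + (1)*d*v1*v2*v3^2 + (-1)*b + (3/2)*b*v3^2 + (-1/2)*b*v3^4 + (1/2)*b*v2^2 + (1/2)*b*v2^2*v3^2 + (-1)*a + (3/2)*a*v3^2 + (-1/2)*a*v3^4 + (1/2)*a*v1^2 + (1/2)*a*v1^2*v3^2)^2) := by
    linear_combination ((-4)*f^2*v3^2 + (-4)*f^2*v2^2 + (6)*f^2*v2^2*v3^2 + (-2)*f^2*v2^2*v3^4 + (-2)*f^2*v2^4*v3^2 + (-2)*f^2*v1^2*v2^2*v3^2 + (-8)*e*f*v1*v2 + (12)*e*f*v1*v2*v3^2 + (-4)*e*f*v1*v2*v3^4 + (-4)*e*f*v1*v2^3*v3^2 + (-4)*e*f*v1^3*v2*v3^2 + (-4)*e^2*v3^2 + (-4)*e^2*v1^2 + (6)*e^2*v1^2*v3^2 + (-2)*e^2*v1^2*v3^4 + (-2)*e^2*v1^2*v2^2*v3^2 + (-2)*e^2*v1^4*v3^2 + (-8)*d*f*v1*v3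 + (12)*d*f*v1*v2^2*v3 + (-4)*d*f*v1*v2^2*v3^3 + (-4)*d*f*v1*v2^4*v3 + (-4)*d*f*v1^3*v2^2*v3 + (-8)*d*e*v2*v3 + (12)*d*e*v1^2*v2*v3 + (-4)*d*e*v1^2*v2*v3^3 + (-4)*d*e*v1^2*v2^3*v3 + (-4)*d*e*v1^4*v2*v3 + (-4)*d^2*v2^2 + (-4)*d^2*v1^2 + (6)*d^2*v1^2*v2^2 + (-2)*d^2*v1^2*v2^2*v3^2 + (-2)*d^2*v1^2*v2^4 + (-2)*d^2*v1^4*v2^2 + (-6)*b*f*v2*v3^3 + (2)*b*f*v2*v3^5 + (6)*b*f*v2^3*v3 + (-2)*b*f*v2^5*v3 + (2)*b*f*v1^2*v2*v3^3 + (-2)*b*f*v1^2*v2^3*v3 + (8)*b*e*v1*v3 + (-6)*b*e*v1*v3^3 + (2)*b*e*v1*v3^5 + (6)*b*e*v1*v2^2*v3 + (-2)*b*e*v1*v2^4*v3 + (2)*b*e*v1^3*v3^3 + (-2)*b*e*v1^3*v2^2*v3 + (-8)*b*d*v1*v2 + (-6)*b*d*v1*v2*v3^2 + (2)*b*d*v1*v2*v3^4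 + (6)*b*d*v1*v2^3 + (-2)*b*d*v1*v2^5 + (2)*b*d*v1^3*v2*v3^2 + (-2)*b*d*v1^3*v2^3 + (-4)*b^2*v3^2 + (3/2)*b^2*v3^4 + (-1/2)*b^2*v3^6 + (-4)*b^2*v2^2 + (-3)*b^2*v2^2*v3^2 + (1/2)*b^2*v2^2*v3^4 + (3/2)*b^2*v2^4 + (1/2)*b^2*v2^4*v3^2 + (-1/2)*b^2*v2^6 + (-1/2)*b^2*v1^2*v3^4 + (1)*b^2*v1^2*v2^2*v3^2 + (-1/2)*b^2*v1^2*v2^4 + (8)*a*f*v2*v3 + (-6)*a*f*v2*v3^3 + (2)*a*f*v2*v3^5 + (2)*a*f*v2^3*v3^3 + (6)*a*f*v1^2*v2*v3 + (-2)*a*f*v1^2*v2^3*v3 + (-2)*a*f*v1^4*v2*v3 + (-6)*a*e*v1*v3^3 + (2)*a*e*v1*v3^5 + (2)*a*e*v1*v2^2*v3^3 + (6)*a*e*v1^3*v3 + (-2)*a*e*v1^3*v2^2*v3 + (-2)*a*e*v1^5*v3 + (-8)*a*d*v1*v2 + (-6)*a*d*v1*v2*v3^2 + (2)*a*d*v1*v2*v3^4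 + (2)*a*d*v1*v2^3*v3^2 + (6)*a*d*v1^3*v2 + (-2)*a*d*v1^3*v2^3 + (-2)*a*d*v1^5*v2 + (-8)*a*b*v3^2 + (3)*a*b*v3^4 + (-1)*a*b*v3^6 + (-3)*a*b*v2^2*v3^2 + (1)*a*b*v2^4*v3^2 + (-3)*a*b*v1^2*v3^2 + (3)*a*b*v1^2*v2^2 + (1)*a*b*v1^2*v2^2*v3^2 + (-1)*a*b*v1^2*v2^4 + (1)*a*b*v1^4*v3^2 + (-1)*a*b*v1^4*v2^2 + (-4)*a^2*v3^2 + (3/2)*a^2*v3^4 + (-1/2)*a^2*v3^6 + (-1/2)*a^2*v2^2*v3^4 + (-4)*a^2*v1^2 + (-3)*a^2*v1^2*v3^2 + (1/2)*a^2*v1^2*v3^4 + (1)*a^2*v1^2*v2^2*v3^2 + (3/2)*a^2*v1^4 + (1/2)*a^2*v1^4*v3^2 + (-1/2)*a^2*v1^4*v2^2 + (-1/2)*a^2*v1^6) * hv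
  rw [h]
  positivity


theorem frobenius_sq_ge_mulVec_unit
    (A : Matrix (Fin 3) (Fin 3) ℝ)
    (hsymm : ∀ i j : Fin 3, A j i = A i j)
    (htr : A 0 0 + A 1 1 + A 2 2 = 0)
    (v : EuclideanSpace ℝ (Fin 3)) (hv : ‖v‖ = 1) :
    ∑ i : Fin 3, ∑ j : Fin 3, (A i j) ^ 2 ≥
      (3 / 2) *
        ‖((EuclideanSpace.equiv (Fin 3) ℝ).symm
            (A.mulVec (EuclideanSpace.equiv (Fin 3) ℝ v)))‖ ^ 2 := by
  have h22 : A 2 2 = -(A 0 0 + A 1 1) := by linarith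
  have hvs : (v 0)^2 + (v 1)^2 + (v 2)^2 = 1 := by
    have h1 : ‖v‖^2 = (v 0)^2 + (v 1)^2 + (v 2)^2 := by
      rw [EuclideanSpace.norm_eq, Real.sq_sqrt (by positivity)]
      simp [Fin.sum_univ_three, Real.norm_eq_abs, sq_abs]
    rw [hv] at h1; nlinarith [h1]
  set w : EuclideanSpace ℝ (Fin 3) :=
    (EuclideanSpace.equiv (Fin 3) ℝ).symm (A.mulVec ((EuclideanSpace.equiv (Fin 3) ℝ) v)) with hwdef
  have hwsq : ‖w‖^2 = (w 0)^2 + (w 1)^2 + (w 2)^2 := by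
    rw [EuclideanSpace.norm_eq, Real.sq_sqrt (by positivity)]
    simp [Fin.sum_univ_three, Real.norm_eq_abs, sq_abs]
  have hwi : ∀ i, w i = A i 0 * v 0 + A i 1 * v 1 + A i 2 * v 2 := by
    intro i
    show A.mulVec (fun j => v j) i = _
    simp [Matrix.mulVec, dotProduct, Fin.sum_univ_three]
  rw [hwsq, hwi 0, hwi 1, hwi 2]
  simp only [Fin.sum_univ_three]
  rw [hsymm 0 1, hsymm 0 2, hsymm 1 2, h22]
  nlinarith [key_scalar (A 0 0) (A 1 1) (A 0 1) (A 0 2) (A 1 2) (v 0) (v 1) (v 2) hvs]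
end

section
/- Let Ω ⊆ EuclideanSpace ℝ (Fin 3) be open and let u : EuclideanSpace ℝ (Fin 3) → ℝ be twice continuously differentiable on Ω (ContDiffOn ℝ 2 u Ω). Assume u is harmonic on Ω, i.e., for every y ∈ Ω, ∑_{i ∈ Fin 3} (iteratedFDeriv ℝ 2 u y) (e i) (e i) = 0, where (e i) is the standard orthonormal basis. Let x ∈ Ω be a point with gradient u x ≠ 0. Then the function y ↦ ‖gradient u y‖ is differentiable at x and ‖fderiv ℝ (fun y => ‖gradient u y‖) x‖^2 ≤ (2/3) · ∑_{i,j ∈ Fin 3} ((iteratedFDeriv ℝ 2 u x) (e i) (e j))^2. -/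
/-!
Let `H` be the Hessian of `u` at `x` and `n = ∇u x / ‖∇u x‖`. Differentiating `‖∇u‖` gives
`v ↦ ⟪H n, v⟫`, so `‖∇‖∇u‖‖ = ‖H n‖`. In an eigenbasis of the symmetric operator `H`,
`‖H n‖² = ∑ λᵢ² nᵢ² ≤ maxᵢ λᵢ²`, and harmonicity says `∑ λᵢ = 0`; Cauchy–Schwarz applied to
`λᵢ = -∑_{j ≠ i} λⱼ` gives `d λᵢ² ≤ (d - 1) ∑ λⱼ² = (d - 1) ‖H‖²` in dimension `d`.
-/

open Finset Module LinearMap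
open scoped RealInnerProductSpace

theorem card_mul_sq_le_of_sum_eq_zero {ι : Type*} [Fintype ι] {f : ι → ℝ}
    (hf : ∑ j, f j = 0) (i : ι) :
    Fintype.card ι * f i ^ 2 ≤ (Fintype.card ι - 1) * ∑ j, f j ^ 2 := by
  classical
  have hrest : ∑ j ∈ univ.erase i, f j = -f i := by
    rw [sum_erase_eq_sub (mem_univ i), hf, zero_sub]
  have hcard : ((univ.erase i).card : ℝ) = Fintype.card ι - 1 := by
    rw [card_erase_of_mem (mem_univ i), card_univ,
      Nat.cast_sub (Fintype.card_pos_iff.2 ⟨i⟩), Nat.cast_one]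
  have hcs := sq_sum_le_card_mul_sum_sq (s := univ.erase i) (f := f)
  rw [hrest, hcard, neg_sq] at hcs
  rw [← add_sum_erase _ _ (mem_univ i)]
  linarith

variable {E : Type*} [NormedAddCommGroup E] [InnerProductSpace ℝ E]

theorem LinearMap.IsSymmetric.finrank_mul_norm_apply_sq_le [FiniteDimensional ℝ E]
    {T : E →ₗ[ℝ] E} (hT : T.IsSymmetric) (htr : trace ℝ E T = 0) (v : E) :
    finrank ℝ E * ‖T v‖ ^ 2 ≤ (finrank ℝ E - 1) * ‖v‖ ^ 2 * trace ℝ E (T ∘ₗ T) := by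
  set b := hT.eigenvectorBasis rfl
  set μ := hT.eigenvalues rfl
  have hb : ∀ i, T (b i) = μ i • b i := hT.apply_eigenvectorBasis rfl
  have hμ : ∑ i, μ i = 0 := by simpa [hT.trace_eq_sum_eigenvalues rfl] using htr
  have htr2 : trace ℝ E (T ∘ₗ T) = ∑ i, μ i ^ 2 := by
    rw [trace_eq_sum_inner _ b]
    refine sum_congr rfl fun i _ => ?_
    simp [hb, inner_smul_right, b.orthonormal.1 i, sq]
  have hTv : ‖T v‖ ^ 2 = ∑ i, μ i ^ 2 * ⟪b i, v⟫ ^ 2 := by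
    rw [← b.sum_sq_inner_right]
    refine sum_congr rfl fun i _ => ?_
    rw [← hT, hb, real_inner_smul_left, mul_pow]
  calc finrank ℝ E * ‖T v‖ ^ 2 = ∑ i, finrank ℝ E * μ i ^ 2 * ⟪b i, v⟫ ^ 2 := by
        rw [hTv, mul_sum]; simp only [mul_assoc]
    _ ≤ ∑ i, (finrank ℝ E - 1) * (∑ j, μ j ^ 2) * ⟪b i, v⟫ ^ 2 := by
        refine sum_le_sum fun i _ => mul_le_mul_of_nonneg_right ?_ (sq_nonneg _)
        simpa using card_mul_sq_le_of_sum_eq_zero hμ i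
    _ = (finrank ℝ E - 1) * ‖v‖ ^ 2 * trace ℝ E (T ∘ₗ T) := by
        rw [htr2, ← b.sum_sq_inner_right v, ← mul_sum]; ring

theorem LinearMap.IsSymmetric.sum_sq_inner_eq_trace {ι : Type*} [Fintype ι]
    {T : E →ₗ[ℝ] E} (hT : T.IsSymmetric) (b : OrthonormalBasis ι ℝ E) :
    ∑ i, ∑ j, ⟪T (b i), b j⟫ ^ 2 = trace ℝ E (T ∘ₗ T) := by
  rw [trace_eq_sum_inner _ b]
  refine sum_congr rfl fun i _ => ?_
  simp_rw [fun j => real_inner_comm (b j) (T (b i)), b.sum_sq_inner_right]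
  rw [comp_apply, ← hT, real_inner_self_eq_norm_sq]

theorem HasFDerivAt.norm {G : Type*} [NormedAddCommGroup G] [NormedSpace ℝ G] {f : G → E}
    {f' : G →L[ℝ] E} {x : G} (hf : HasFDerivAt f f' x) (h0 : f x ≠ 0) :
    HasFDerivAt (fun y => ‖f y‖) (‖f x‖⁻¹ • (innerSL ℝ (f x)).comp f') x := by
  have hpos : 0 < ‖f x‖ ^ 2 := by positivity
  have h := (Real.hasDerivAt_sqrt hpos.ne').comp_hasFDerivAt x hf.norm_sq
  simp only [Function.comp_def, Real.sqrt_sq_eq_abs, abs_norm] at h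
  refine h.congr_fderiv ?_
  ext v
  simp only [_root_.smul_apply, ContinuousLinearMap.comp_apply, coe_innerSL_apply,
    nsmul_eq_mul, Nat.cast_ofNat, smul_eq_mul]
  field_simp

theorem ContDiffAt.differentiableAt_fderiv {𝕜 F G : Type*} [NontriviallyNormedField 𝕜]
    [NormedAddCommGroup F] [NormedSpace 𝕜 F] [NormedAddCommGroup G] [NormedSpace 𝕜 G]
    {f : F → G} {x : F} (hf : ContDiffAt 𝕜 2 f x) : DifferentiableAt 𝕜 (fderiv 𝕜 f) x :=
  (hf.fderiv_right (m := 1) (by norm_num)).differentiableAt one_ne_zero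

section Hessian

variable [CompleteSpace E] {u : E → ℝ} {x : E}

theorem hasFDerivAt_gradient (hu : DifferentiableAt ℝ (fderiv ℝ u) x) :
    HasFDerivAt (gradient u)
      ((InnerProductSpace.toDual ℝ E).symm.toContinuousLinearEquiv.toContinuousLinearMap.comp
        (fderiv ℝ (fderiv ℝ u) x)) x :=
  (InnerProductSpace.toDual ℝ E).symm.toContinuousLinearEquiv.hasFDerivAt.comp x
    hu.hasFDerivAt

theorem inner_fderiv_gradient_apply (hu : DifferentiableAt ℝ (fderiv ℝ u) x) (v w : E) :
    ⟪fderiv ℝ (gradient u) x v, w⟫ = fderiv ℝ (fderiv ℝ u) x v w := by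
  rw [(hasFDerivAt_gradient hu).fderiv]
  exact InnerProductSpace.toDual_symm_apply

theorem ContDiffAt.iteratedFDeriv_two_apply_eq_inner (hu : ContDiffAt ℝ 2 u x) (v w : E) :
    iteratedFDeriv ℝ 2 u x ![v, w] = ⟪fderiv ℝ (gradient u) x v, w⟫ := by
  rw [iteratedFDeriv_two_apply, inner_fderiv_gradient_apply hu.differentiableAt_fderiv]
  rfl

theorem ContDiffAt.isSymmetric_fderiv_gradient (hu : ContDiffAt ℝ 2 u x) :
    (fderiv ℝ (gradient u) x : E →ₗ[ℝ] E).IsSymmetric := fun v w => by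
  rw [ContinuousLinearMap.coe_coe, ← real_inner_comm v,
    inner_fderiv_gradient_apply hu.differentiableAt_fderiv,
    inner_fderiv_gradient_apply hu.differentiableAt_fderiv,
    hu.isSymmSndFDerivAt (by simp) v w]

theorem ContDiffAt.finrank_mul_norm_fderiv_norm_gradient_sq_le [FiniteDimensional ℝ E]
    (hu : ContDiffAt ℝ 2 u x)
    (hΔ : trace ℝ E (fderiv ℝ (gradient u) x : E →ₗ[ℝ] E) = 0) (hx : gradient u x ≠ 0) :
    DifferentiableAt ℝ (fun y => ‖gradient u y‖) x ∧
      finrank ℝ E * ‖fderiv ℝ (fun y => ‖gradient u y‖) x‖ ^ 2 ≤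
        (finrank ℝ E - 1) * trace ℝ E ((fderiv ℝ (gradient u) x : E →ₗ[ℝ] E) ∘ₗ
          (fderiv ℝ (gradient u) x : E →ₗ[ℝ] E)) := by
  set H := fderiv ℝ (gradient u) x
  have hH : (H : E →ₗ[ℝ] E).IsSymmetric := hu.isSymmetric_fderiv_gradient
  have hG : HasFDerivAt (gradient u) H x :=
    (hasFDerivAt_gradient hu.differentiableAt_fderiv).differentiableAt.hasFDerivAt
  have hD := hG.norm hx
  have hcomp : (innerSL ℝ (gradient u x)).comp H = innerSL ℝ (H (gradient u x)) := by
    ext v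
    exact (hH _ _).symm
  have hnorm : ‖fderiv ℝ (fun y => ‖gradient u y‖) x‖ * ‖gradient u x‖ = ‖H (gradient u x)‖ := by
    rw [hD.fderiv, hcomp, norm_smul, innerSL_apply_norm, norm_inv, norm_norm]
    field_simp [norm_ne_zero_iff.2 hx]
  refine ⟨hD.differentiableAt, le_of_mul_le_mul_right ?_ (pow_pos (norm_pos_iff.2 hx) 2)⟩
  have hkato := hH.finrank_mul_norm_apply_sq_le hΔ (gradient u x)
  rw [ContinuousLinearMap.coe_coe, ← hnorm] at hkato
  linear_combination hkato

end Hessian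

theorem refined_kato_harmonic
    (Ω : Set (EuclideanSpace ℝ (Fin 3))) (hΩ : IsOpen Ω)
    (u : EuclideanSpace ℝ (Fin 3) → ℝ)
    (hu : ContDiffOn ℝ 2 u Ω)
    (harm : ∀ y ∈ Ω, ∑ i : Fin 3,
      (iteratedFDeriv ℝ 2 u y)
        ![EuclideanSpace.single i (1 : ℝ), EuclideanSpace.single i (1 : ℝ)] = 0)
    (x : EuclideanSpace ℝ (Fin 3)) (hx : x ∈ Ω)
    (hgrad : gradient u x ≠ 0) :
    DifferentiableAt ℝ (fun y => ‖gradient u y‖) x ∧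
      ‖fderiv ℝ (fun y => ‖gradient u y‖) x‖ ^ 2 ≤
        (2 / 3) * ∑ i : Fin 3, ∑ j : Fin 3,
          ((iteratedFDeriv ℝ 2 u x)
            ![EuclideanSpace.single i (1 : ℝ), EuclideanSpace.single j (1 : ℝ)]) ^ 2 := by
  have hu2 : ContDiffAt ℝ 2 u x := hu.contDiffAt (hΩ.mem_nhds hx)
  set b := EuclideanSpace.basisFun (Fin 3) ℝ
  have hentry (i j : Fin 3) : iteratedFDeriv ℝ 2 u x
      ![EuclideanSpace.single i 1, EuclideanSpace.single j 1] =
        ⟪fderiv ℝ (gradient u) x (b i), b j⟫ := by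
    rw [hu2.iteratedFDeriv_two_apply_eq_inner, EuclideanSpace.basisFun_apply,
      EuclideanSpace.basisFun_apply]
  have hΔ : trace ℝ _ (fderiv ℝ (gradient u) x : EuclideanSpace ℝ (Fin 3) →ₗ[ℝ] _) = 0 := by
    rw [trace_eq_sum_inner _ b, ← harm x hx]
    simp only [hentry, ContinuousLinearMap.coe_coe, real_inner_comm]
  have hHS := hu2.isSymmetric_fderiv_gradient.sum_sq_inner_eq_trace b
  rw [ContinuousLinearMap.coe_coe] at hHS
  obtain ⟨hdiff, hkato⟩ := hu2.finrank_mul_norm_fderiv_norm_gradient_sq_le hΔ hgrad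
  rw [finrank_euclideanSpace_fin, Nat.cast_ofNat] at hkato
  simp_rw [hentry, hHS]
  exact ⟨hdiff, by linarith⟩
end

section
/- Let t > 0 and let w : ℝ → ℝ be differentiable on [t, ∞) with w r > 0 for all r ≥ t. Assume that r ↦ r⁻² · (deriv w r)² / (w r) and r ↦ r⁻⁴ · w r are Lebesgue integrable on (t, ∞), and that r⁻³ · w r → 0 as r → ∞. Then (3/4) · ∫_{(t,∞)} r⁻² · (deriv w r)² / (w r) dr ≥ 6 · ∫_{(t,∞)} r⁻⁴ · w r dr − 3 · t⁻³ · w t. -/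
open MeasureTheory Filter

/-!
Expanding `0 ≤ (r w' - 2 w)² / (r⁴ w)` gives the pointwise bound
`r⁻² w'² / w ≥ 4 r⁻³ w' - 4 r⁻⁴ w`. Integrating over `(t, ∞)` and integrating by parts,
`∫ r⁻³ w' = 3 ∫ r⁻⁴ w - t⁻³ w(t)`, yields `∫ r⁻² w'² / w ≥ 8 ∫ r⁻⁴ w - 4 t⁻³ w(t)`.
-/

theorem abs_inv_pow_three_mul_le (r a : ℝ) {u : ℝ} (hu : 0 < u) :
    |(r ^ 3)⁻¹ * a| ≤ 4⁻¹ * ((r ^ 2)⁻¹ * a ^ 2 / u) + (r ^ 4)⁻¹ * u := by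
  rcases eq_or_ne r 0 with rfl | hr
  · simp
  rw [abs_mul, abs_inv, abs_pow, ← sq_abs r, ← Even.pow_abs (by decide : Even 4) r]
  have hρ : 0 < |r| := abs_pos.mpr hr
  generalize |r| = ρ at hρ ⊢
  rw [← sub_nonneg]
  have hdefect : 4⁻¹ * ((ρ ^ 2)⁻¹ * a ^ 2 / u) + (ρ ^ 4)⁻¹ * u - (ρ ^ 3)⁻¹ * |a|
      = (ρ * |a| - 2 * u) ^ 2 / (4 * ρ ^ 4 * u) := by
    field_simp
    rw [← sq_abs a]
    ring
  rw [hdefect]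
  positivity

theorem four_mul_inv_pow_three_mul_sub_le (r a : ℝ) {u : ℝ} (hu : 0 < u) :
    4 * ((r ^ 3)⁻¹ * a) - 4 * ((r ^ 4)⁻¹ * u) ≤ (r ^ 2)⁻¹ * a ^ 2 / u := by
  linarith [le_abs_self ((r ^ 3)⁻¹ * a), abs_inv_pow_three_mul_le r a hu]

theorem integrableOn_inv_pow_three_mul_deriv {s : Set ℝ} {w : ℝ → ℝ}
    (hs : MeasurableSet s) (hpos : ∀ r ∈ s, 0 < w r)
    (h1 : IntegrableOn (fun r : ℝ => (r ^ 2)⁻¹ * (deriv w r) ^ 2 / w r) s)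
    (h2 : IntegrableOn (fun r : ℝ => (r ^ 4)⁻¹ * w r) s) :
    IntegrableOn (fun r : ℝ => (r ^ 3)⁻¹ * deriv w r) s := by
  refine Integrable.mono' ((h1.const_mul 4⁻¹).add h2)
    ((measurable_id.pow_const 3).inv.mul (measurable_deriv w)).aestronglyMeasurable ?_
  rw [ae_restrict_iff' hs]
  exact Eventually.of_forall fun r hr => abs_inv_pow_three_mul_le r _ (hpos r hr)

theorem integral_Ioi_inv_pow_mul_deriv {t : ℝ} (ht : 0 < t) {w : ℝ → ℝ} (n : ℕ)
    (hw : DifferentiableOn ℝ w (Set.Ici t))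
    (hint_deriv : IntegrableOn (fun r : ℝ => (r ^ n)⁻¹ * deriv w r) (Set.Ioi t))
    (hint : IntegrableOn (fun r : ℝ => (r ^ (n + 1))⁻¹ * w r) (Set.Ioi t))
    (hdecay : Tendsto (fun r : ℝ => (r ^ n)⁻¹ * w r) atTop (nhds 0)) :
    ∫ r in Set.Ioi t, (r ^ n)⁻¹ * deriv w r
      = n * (∫ r in Set.Ioi t, (r ^ (n + 1))⁻¹ * w r) - (t ^ n)⁻¹ * w t := by
  have hcont : ContinuousWithinAt (fun r => (r ^ n)⁻¹ * w r) (Set.Ici t) t :=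
    ((continuousAt_id.pow n).inv₀ (pow_ne_zero n ht.ne')).continuousWithinAt.mul
      (hw t Set.self_mem_Ici).continuousWithinAt
  have hderiv : ∀ r ∈ Set.Ioi t, HasDerivAt (fun r => (r ^ n)⁻¹ * w r)
      (-n * ((r ^ (n + 1))⁻¹ * w r) + (r ^ n)⁻¹ * deriv w r) r := by
    intro r hr
    have hr0 : r ≠ 0 := (ht.trans hr).ne'
    have hwr : HasDerivAt w (deriv w r) r :=
      (hw.differentiableAt (Ici_mem_nhds hr)).hasDerivAt
    refine (((hasDerivAt_pow n r).inv (pow_ne_zero n hr0)).mul hwr).congr_deriv ?_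
    simp only [Pi.inv_apply]
    rcases n with _ | k
    · simp
    · rw [Nat.add_sub_cancel]
      field_simp
      ring
  have hibp := integral_Ioi_of_hasDerivAt_of_tendsto hcont hderiv
    ((hint.const_mul (-n)).add hint_deriv) hdecay
  rw [integral_add (hint.const_mul _) hint_deriv, integral_const_mul] at hibp
  linarith

theorem energy_integral_inequality
    (t : ℝ) (ht : 0 < t) (w : ℝ → ℝ)
    (hw : DifferentiableOn ℝ w (Set.Ici t))
    (hpos : ∀ r ≥ t, 0 < w r)
    (h1 : IntegrableOn (fun r : ℝ => (r ^ 2)⁻¹ * (deriv w r) ^ 2 / w r) (Set.Ioi t))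
    (h2 : IntegrableOn (fun r : ℝ => (r ^ 4)⁻¹ * w r) (Set.Ioi t))
    (hdecay : Tendsto (fun r : ℝ => (r ^ 3)⁻¹ * w r) atTop (nhds 0)) :
    (3 / 4) * ∫ r in Set.Ioi t, (r ^ 2)⁻¹ * (deriv w r) ^ 2 / w r ≥
      6 * (∫ r in Set.Ioi t, (r ^ 4)⁻¹ * w r) - 3 * (t ^ 3)⁻¹ * w t := by
  have hpos' : ∀ r ∈ Set.Ioi t, 0 < w r := fun r hr => hpos r (le_of_lt hr)
  have h3 := integrableOn_inv_pow_three_mul_deriv measurableSet_Ioi hpos' h1 h2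
  have hibp := integral_Ioi_inv_pow_mul_deriv ht 3 hw h3 h2 hdecay
  have hmono : ∫ r in Set.Ioi t, (4 * ((r ^ 3)⁻¹ * deriv w r) - 4 * ((r ^ 4)⁻¹ * w r))
      ≤ ∫ r in Set.Ioi t, (r ^ 2)⁻¹ * (deriv w r) ^ 2 / w r :=
    setIntegral_mono_on ((h3.const_mul 4).sub (h2.const_mul 4)) h1 measurableSet_Ioi
      fun r hr => four_mul_inv_pow_three_mul_sub_le r _ (hpos' r hr)
  rw [integral_sub (h3.const_mul 4) (h2.const_mul 4), integral_const_mul,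
    integral_const_mul] at hmono
  push_cast at hibp
  linarith
end

section
/- Let w : ℝ → ℝ be differentiable on (0, ∞) with w t > 0 for all t > 0. Assume: (i) for every t > 0, the functions r ↦ r⁻⁴ · w r and r ↦ r⁻² · (deriv w r)² / (w r) are Lebesgue integrable on (t, ∞); (ii) r⁻³ · w r → 0 as r → ∞; (iii) for every t > 0, t⁻² · deriv w t ≤ −2·t⁻³ · w t + 6 · ∫_{(t,∞)} r⁻⁴ · w r dr − (3/4) · ∫_{(t,∞)} r⁻² · (deriv w r)² / (w r) dr + 4π/t; and (iv) w(δ)/δ → 0 as δ → 0⁺. Then w(t) ≤ 4π·t² for all t > 0. -/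
/-!
Completing the square, `r⁻² w'² / w ≥ 4 r⁻³ w' - 4 r⁻⁴ w`, and integrating over `(t, ∞)`, where
`r⁻³ w' - 3 r⁻⁴ w` is the derivative of `r⁻³ w` and `r⁻³ w → 0` at infinity, turns the
integro-differential inequality into `t w' ≤ w + 4π t²`. Hence `w t / t - 4π t` is nonincreasing,
and it tends to `0` as `t → 0⁺`, so it is nonpositive.
-/

open MeasureTheory Filter Real Set Topology

section Pointwise

variable {a r W : ℝ}

lemma abs_mul_inv_pow_three_le (hr : 0 < r) (hW : 0 < W) :
    |a| * (r ^ 3)⁻¹ ≤ 1 / 2 * ((r ^ 2)⁻¹ * a ^ 2 / W + (r ^ 4)⁻¹ * W) := by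
  have hsq : 1 / 2 * ((r ^ 2)⁻¹ * a ^ 2 / W + (r ^ 4)⁻¹ * W) - |a| * (r ^ 3)⁻¹
      = (|a| * r - W) ^ 2 / (2 * W * r ^ 4) := by
    field_simp
    rw [← sq_abs a]
    ring
  have : 0 ≤ (|a| * r - W) ^ 2 / (2 * W * r ^ 4) := by positivity
  linarith

lemma four_mul_sub_add_le_inv_sq_mul_sq_div (hr : 0 < r) (hW : 0 < W) :
    4 * (a * (r ^ 3)⁻¹ - 3 * ((r ^ 4)⁻¹ * W)) + 8 * ((r ^ 4)⁻¹ * W)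
      ≤ (r ^ 2)⁻¹ * a ^ 2 / W := by
  have hsq : (r ^ 2)⁻¹ * a ^ 2 / W
      - (4 * (a * (r ^ 3)⁻¹ - 3 * ((r ^ 4)⁻¹ * W)) + 8 * ((r ^ 4)⁻¹ * W))
      = (a * r - 2 * W) ^ 2 / (W * r ^ 4) := by
    field_simp
    ring
  have : 0 ≤ (a * r - 2 * W) ^ 2 / (W * r ^ 4) := by positivity
  linarith

end Pointwise

lemma integrableOn_mul_inv_pow_three {v W : ℝ → ℝ} {t : ℝ} (ht : 0 < t) (hv : Measurable v)
    (hW : ∀ r > t, 0 < W r)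
    (hint1 : IntegrableOn (fun r => (r ^ 4)⁻¹ * W r) (Ioi t))
    (hint2 : IntegrableOn (fun r => (r ^ 2)⁻¹ * v r ^ 2 / W r) (Ioi t)) :
    IntegrableOn (fun r => v r * (r ^ 3)⁻¹) (Ioi t) := by
  refine Integrable.mono' ((hint2.add hint1).const_mul (1 / 2)) ?_ ?_
  · exact (hv.mul (measurable_id.pow_const 3).inv).aestronglyMeasurable
  · filter_upwards [ae_restrict_mem measurableSet_Ioi] with r (hr : t < r)
    have hr0 : 0 < r := ht.trans hr
    rw [norm_mul, norm_inv, norm_pow, Real.norm_eq_abs, Real.norm_of_nonneg hr0.le]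
    exact abs_mul_inv_pow_three_le hr0 (hW r hr)

lemma integral_Ioi_deriv_mul_inv_pow_three {w : ℝ → ℝ} {t : ℝ} (ht : 0 < t)
    (hw : DifferentiableOn ℝ w (Ioi 0))
    (hint : IntegrableOn (fun r => deriv w r * (r ^ 3)⁻¹ - 3 * ((r ^ 4)⁻¹ * w r)) (Ioi t))
    (hdecay : Tendsto (fun r => (r ^ 3)⁻¹ * w r) atTop (𝓝 0)) :
    ∫ r in Ioi t, (deriv w r * (r ^ 3)⁻¹ - 3 * ((r ^ 4)⁻¹ * w r)) = -((t ^ 3)⁻¹ * w t) := by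
  have hderiv : ∀ x > 0, HasDerivAt (fun r => (r ^ 3)⁻¹ * w r)
      (deriv w x * (x ^ 3)⁻¹ - 3 * ((x ^ 4)⁻¹ * w x)) x := by
    intro x hx
    have hwx := (hw.differentiableAt (Ioi_mem_nhds hx)).hasDerivAt
    refine (((hasDerivAt_pow 3 x).inv (pow_ne_zero 3 hx.ne')).mul hwx).congr_deriv ?_
    simp only [Pi.inv_apply]
    field_simp
    ring
  rw [integral_Ioi_of_hasDerivAt_of_tendsto (hderiv t ht).continuousAt.continuousWithinAt
    (fun x hx => hderiv x (ht.trans hx)) hint hdecay, zero_sub]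

lemma eight_mul_integral_sub_le_integral {w : ℝ → ℝ} {t : ℝ} (ht : 0 < t)
    (hw : DifferentiableOn ℝ w (Ioi 0)) (hpos : ∀ r > t, 0 < w r)
    (hint1 : IntegrableOn (fun r => (r ^ 4)⁻¹ * w r) (Ioi t))
    (hint2 : IntegrableOn (fun r => (r ^ 2)⁻¹ * deriv w r ^ 2 / w r) (Ioi t))
    (hdecay : Tendsto (fun r => (r ^ 3)⁻¹ * w r) atTop (𝓝 0)) :
    8 * (∫ r in Ioi t, (r ^ 4)⁻¹ * w r) - 4 * ((t ^ 3)⁻¹ * w t)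
      ≤ ∫ r in Ioi t, (r ^ 2)⁻¹ * deriv w r ^ 2 / w r := by
  have hint : IntegrableOn (fun r => deriv w r * (r ^ 3)⁻¹ - 3 * ((r ^ 4)⁻¹ * w r)) (Ioi t) :=
    (integrableOn_mul_inv_pow_three ht (measurable_deriv w) hpos hint1 hint2).sub
      (hint1.const_mul 3)
  have hmono := setIntegral_mono_on ((hint.const_mul 4).add (hint1.const_mul 8)) hint2
    measurableSet_Ioi fun r (hr : t < r) =>
      four_mul_sub_add_le_inv_sq_mul_sq_div (ht.trans hr) (hpos r hr)
  simp only [Pi.add_apply] at hmono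
  rw [integral_add (hint.const_mul 4) (hint1.const_mul 8), integral_const_mul,
    integral_const_mul, integral_Ioi_deriv_mul_inv_pow_three ht hw hint hdecay] at hmono
  linarith

section Comparison

variable {f : ℝ → ℝ} {c : ℝ}

lemma antitoneOn_div_sub_mul_of_mul_deriv_le (hf : DifferentiableOn ℝ f (Ioi 0))
    (hderiv : ∀ t > 0, t * deriv f t ≤ f t + c * t ^ 2) :
    AntitoneOn (fun s => f s / s - c * s) (Ioi 0) := by
  have hF : ∀ x > 0, HasDerivAt (fun s => f s / s - c * s)
      ((deriv f x * x - f x * 1) / x ^ 2 - c * 1) x := fun x hx =>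
    (((hf.differentiableAt (Ioi_mem_nhds hx)).hasDerivAt).div (hasDerivAt_id x) hx.ne').sub
      ((hasDerivAt_id x).const_mul c)
  refine antitoneOn_of_deriv_nonpos (convex_Ioi 0)
    ((hf.continuousOn.div continuousOn_id fun x hx => ne_of_gt hx).sub
      (continuous_const.mul continuous_id).continuousOn) ?_ ?_
  · rw [interior_Ioi]
    exact fun x hx => (hF x hx).differentiableAt.differentiableWithinAt
  · rw [interior_Ioi]
    intro x (hx : 0 < x)
    rw [(hF x hx).deriv, sub_nonpos, div_le_iff₀ (pow_pos hx 2)]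
    nlinarith [hderiv x hx]

theorem le_mul_sq_of_mul_deriv_le (hf : DifferentiableOn ℝ f (Ioi 0))
    (hderiv : ∀ t > 0, t * deriv f t ≤ f t + c * t ^ 2)
    (hlim : Tendsto (fun δ => f δ / δ) (𝓝[>] 0) (𝓝 0)) :
    ∀ t > 0, f t ≤ c * t ^ 2 := by
  intro t ht
  have hF := antitoneOn_div_sub_mul_of_mul_deriv_le hf hderiv
  have hlimF : Tendsto (fun s => f s / s - c * s) (𝓝[>] 0) (𝓝 0) := by
    have hlin : Tendsto (fun s : ℝ => c * s) (𝓝[>] 0) (𝓝 0) :=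
      tendsto_nhdsWithin_of_tendsto_nhds ((continuous_const_mul c).tendsto' 0 0 (mul_zero c))
    simpa using hlim.sub hlin
  have hFt : f t / t - c * t ≤ 0 := by
    refine ge_of_tendsto hlimF ?_
    filter_upwards [self_mem_nhdsWithin, Ioo_mem_nhdsGT ht] with δ hδ hδt
    exact hF hδ ht hδt.2.le
  rw [sub_nonpos, div_le_iff₀ ht] at hFt
  linarith

end Comparison

theorem energy_bound_from_integro_differential_inequality
    (w : ℝ → ℝ)
    (hw : DifferentiableOn ℝ w (Set.Ioi 0))
    (hpos : ∀ t > (0 : ℝ), 0 < w t)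
    (hint1 : ∀ t > (0 : ℝ),
      IntegrableOn (fun r : ℝ => (r ^ 4)⁻¹ * w r) (Set.Ioi t))
    (hint2 : ∀ t > (0 : ℝ),
      IntegrableOn (fun r : ℝ => (r ^ 2)⁻¹ * (deriv w r) ^ 2 / w r) (Set.Ioi t))
    (hdecay : Tendsto (fun r : ℝ => (r ^ 3)⁻¹ * w r) atTop (nhds 0))
    (hineq : ∀ t > (0 : ℝ),
      (t ^ 2)⁻¹ * deriv w t ≤
        -2 * (t ^ 3)⁻¹ * w t + 6 * (∫ r in Set.Ioi t, (r ^ 4)⁻¹ * w r)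
          - (3 / 4) * (∫ r in Set.Ioi t, (r ^ 2)⁻¹ * (deriv w r) ^ 2 / w r)
          + 4 * π / t)
    (hlim : Tendsto (fun δ => w δ / δ) (nhdsWithin 0 (Set.Ioi 0)) (nhds 0)) :
    ∀ t > (0 : ℝ), w t ≤ 4 * π * t ^ 2 := by
  refine le_mul_sq_of_mul_deriv_le hw (fun t ht => ?_) hlim
  have hI := eight_mul_integral_sub_le_integral ht hw (fun r hr => hpos r (ht.trans hr))
    (hint1 t ht) (hint2 t ht) hdecay
  have hbound : (t ^ 2)⁻¹ * deriv w t ≤ (t ^ 3)⁻¹ * w t + 4 * π / t := by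
    linarith [hineq t ht]
  have hscaled := mul_le_mul_of_nonneg_left hbound (pow_pos ht 3).le
  have ht0 : t ≠ 0 := ht.ne'
  calc t * deriv w t = t ^ 3 * ((t ^ 2)⁻¹ * deriv w t) := by field_simp
    _ ≤ t ^ 3 * ((t ^ 3)⁻¹ * w t + 4 * π / t) := hscaled
    _ = w t + 4 * π * t ^ 2 := by field_simp
end

section
/- Let Ω ⊆ EuclideanSpace ℝ (Fin 3) be open and connected, and let f : EuclideanSpace ℝ (Fin 3) → ℝ be twice continuously differentiable on Ω (ContDiffOn ℝ 2 f Ω) with f x > 0 for all x ∈ Ω. Assume that ‖gradient f x‖ = 1 for every x ∈ Ω, and that the Hessian of (1/2)·f² is the identity bilinear form on Ω, i.e., for every x ∈ Ω and all vectors v, w, (iteratedFDeriv ℝ 2 (fun y => f y ^ 2 / 2) x) v w = ⟪v, w⟫. Then there exists a point x₀ ∈ EuclideanSpace ℝ (Fin 3) such that f x = ‖x − x₀‖ for all x ∈ Ω. -/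
open scoped RealInnerProductSpace

/-!
Put `G = f² / 2`. Its Hessian is the identity, so `∇G x - x` has zero derivative on the connected
set `Ω` and equals some constant `-x₀`: `∇G x = x - x₀`. On the other hand `∇G = f ∇f` and
`‖∇f‖ = 1`, so `f x = ‖∇G x‖ = ‖x - x₀‖`.
-/

variable {E : Type*} [NormedAddCommGroup E] [InnerProductSpace ℝ E]

theorem fderiv_fderiv_eq_innerSL_of_iteratedFDeriv_two {G : E → ℝ} {x : E}
    (h : ∀ v w : E, iteratedFDeriv ℝ 2 G x ![v, w] = ⟪v, w⟫) :
    fderiv ℝ (fderiv ℝ G) x = innerSL ℝ := by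
  ext v w
  exact (iteratedFDeriv_two_apply G x ![v, w]).symm.trans (h v w)

variable [CompleteSpace E]

theorem gradient_eq_of_fderiv_eq_innerSL {G : E → ℝ} {x v : E}
    (h : fderiv ℝ G x = innerSL ℝ v) : gradient G x = v := by
  rw [gradient, ← (InnerProductSpace.toDual ℝ E).symm_apply_apply v]
  congr 1

theorem IsOpen.exists_gradient_eq_sub_of_fderiv_fderiv_eq_innerSL
    {s : Set E} (hs : IsOpen s) (hs' : IsPreconnected s) (hne : s.Nonempty) {G : E → ℝ}
    (hG : DifferentiableOn ℝ (fderiv ℝ G) s)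
    (hG' : ∀ x ∈ s, fderiv ℝ (fderiv ℝ G) x = innerSL ℝ) :
    ∃ x₀ : E, ∀ x ∈ s, gradient G x = x - x₀ := by
  obtain ⟨x₁, hx₁⟩ := hne
  set x₀ := x₁ - gradient G x₁
  have hlin (y : E) : HasFDerivAt (fun y => innerSL ℝ (y - x₀)) (innerSL ℝ) y := by
    simpa using ((innerSL ℝ).hasFDerivAt (x := y)).sub_const (innerSL ℝ x₀)
  refine ⟨x₀, fun x hx => gradient_eq_of_fderiv_eq_innerSL ?_⟩
  refine hs.eqOn_of_fderiv_eq hs' hG (fun y _ => (hlin y).differentiableAt.differentiableWithinAt)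
    (fun y hy => by rw [hG' y hy, (hlin y).fderiv]) hx₁ ?_ hx
  rw [sub_sub_cancel]
  exact toDual_gradient.symm

theorem gradient_sq_div_two {f : E → ℝ} {x : E} (hf : DifferentiableAt ℝ f x) :
    gradient (fun y => f y ^ 2 / 2) x = f x • gradient f x := by
  have hG : HasFDerivAt (fun y => f y ^ 2 / 2) (f x • fderiv ℝ f x) x := by
    simp_rw [div_eq_mul_inv]
    refine ((hf.hasFDerivAt.pow 2).mul_const 2⁻¹).congr_fderiv ?_
    ext v
    simp only [Nat.add_one_sub_one, pow_one, nsmul_eq_mul, Nat.cast_ofNat, smul_apply, smul_eq_mul]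
    ring
  rw [gradient, hG.fderiv, map_smul, gradient]

theorem rigidity_distance_function
    (Ω : Set (EuclideanSpace ℝ (Fin 3))) (hΩ : IsOpen Ω) (hconn : IsConnected Ω)
    (f : EuclideanSpace ℝ (Fin 3) → ℝ)
    (hf : ContDiffOn ℝ 2 f Ω)
    (hpos : ∀ x ∈ Ω, 0 < f x)
    (hgrad : ∀ x ∈ Ω, ‖gradient f x‖ = 1)
    (hhess : ∀ x ∈ Ω, ∀ v w : EuclideanSpace ℝ (Fin 3),
      (iteratedFDeriv ℝ 2 (fun y => f y ^ 2 / 2) x) ![v, w] = ⟪v, w⟫) :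
    ∃ x₀ : EuclideanSpace ℝ (Fin 3), ∀ x ∈ Ω, f x = ‖x - x₀‖ := by
  have hG : ContDiffOn ℝ 2 (fun y => f y ^ 2 / 2) Ω := (hf.pow 2).div_const 2
  obtain ⟨x₀, hx₀⟩ := hΩ.exists_gradient_eq_sub_of_fderiv_fderiv_eq_innerSL hconn.isPreconnected
    hconn.nonempty ((hG.fderiv_of_isOpen hΩ (m := 1) (by norm_num)).differentiableOn one_ne_zero)
    fun x hx => fderiv_fderiv_eq_innerSL_of_iteratedFDeriv_two (hhess x hx)
  refine ⟨x₀, fun x hx => ?_⟩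
  have hfx : DifferentiableAt ℝ f x :=
    (hf.contDiffAt (hΩ.mem_nhds hx)).differentiableAt two_ne_zero
  calc f x = ‖f x • gradient f x‖ := by
        rw [norm_smul, hgrad x hx, mul_one, Real.norm_of_nonneg (hpos x hx).le]
    _ = ‖x - x₀‖ := by rw [← gradient_sq_div_two hfx, hx₀ x hx]
end
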